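/- arXiv:1908.04141 — 6 statements merged into one kernel-verified Lean document; each statement's English description precedes it below -/
import Mathlib

section
/- The weight of any multiterminal cut of G is at least half the sum over all terminals s in T of the minimum s-T-cut values, i.e., W(G) ≥ (1/2) · Σ_{s ∈ T} λ(G, s, T\{s}). -/
open Finset

/-- Weight of the multiterminal cut induced by block assignment `f`
(each unordered edge counted once via `u < v`). -/
def cutWeight {n k : ℕ} (w : Fin n → Fin n → ℕ) (f : Fin n → Fin k) : ℕ :=
  ∑ u : Fin n, ∑ v : Fin n, if u < v ∧ f u ≠ f v then w u v else 0

/-- `f` is a valid multiterminal-cut partition: terminal `t i` is in block `i`. -/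
def isMTCut {n k : ℕ} (t : Fin k → Fin n) (f : Fin n → Fin k) : Prop :=
  ∀ i, f (t i) = i

/-- Minimum multiterminal cut weight `W(G)`. -/
noncomputable def mtc {n k : ℕ} (w : Fin n → Fin n → ℕ) (t : Fin k → Fin n) : ℕ :=
  sInf {c | ∃ f : Fin n → Fin k, isMTCut t f ∧ cutWeight w f = c}

/-- Weight of the bipartition cut induced by `g`. -/
def biCut {n : ℕ} (w : Fin n → Fin n → ℕ) (g : Fin n → Bool) : ℕ :=
  ∑ u : Fin n, ∑ v : Fin n, if u < v ∧ g u ≠ g v then w u v else 0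

/-- Minimum isolating cut value `λ(G, t i, T \ {t i})`. -/
noncomputable def isoCut {n k : ℕ} (w : Fin n → Fin n → ℕ) (t : Fin k → Fin n) (i : Fin k) : ℕ :=
  sInf {c | ∃ g : Fin n → Bool, g (t i) = true ∧ (∀ j, j ≠ i → g (t j) = false) ∧ biCut w g = c}

/-- Minimum `u`-`v` cut value `λ(u,v)`. -/
noncomputable def minUV {n : ℕ} (w : Fin n → Fin n → ℕ) (u v : Fin n) : ℕ :=
  sInf {c | ∃ g : Fin n → Bool, g u = true ∧ g v = false ∧ biCut w g = c}

/-- Boundary weight `δ` of block `i` of partition `f`. -/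
def blockBd {n k : ℕ} (w : Fin n → Fin n → ℕ) (f : Fin n → Fin k) (i : Fin k) : ℕ :=
  ∑ u : Fin n, ∑ v : Fin n, if f u = i ∧ f v ≠ i then w u v else 0

/-- The weight function of `G - e` for `e = (u,v)`. -/
def delEdge {n : ℕ} (w : Fin n → Fin n → ℕ) (u v : Fin n) : Fin n → Fin n → ℕ :=
  fun a b => if (a = u ∧ b = v) ∨ (a = v ∧ b = u) then 0 else w a b

/-- W(G) ≥ (1/2) Σ_{s ∈ T} λ(G, s, T\{s}), stated as
Σ_i λ(G, t_i, T\{t_i}) ≤ 2 · W(G). -/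
theorem stmt2 {n k : ℕ} (w : Fin n → Fin n → ℕ) (t : Fin k → Fin n)
    (hsym : ∀ a b, w a b = w b a) (hloop : ∀ a, w a a = 0)
    (ht : Function.Injective t) (hk : 0 < k) :
    ∑ i : Fin k, isoCut w t i ≤ 2 * mtc w t := by
  classical
  have hne : {c | ∃ f : Fin n → Fin k, isMTCut t f ∧ cutWeight w f = c}.Nonempty := by
    refine ⟨_, fun v => if h : ∃ i, t i = v then h.choose else ⟨0, hk⟩, ?_, rfl⟩
    intro i
    have hex : ∃ j, t j = t i := ⟨i, rfl⟩
    simp only [dif_pos hex]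
    exact ht hex.choose_spec
  obtain ⟨f, hf, hfc⟩ := Nat.sInf_mem hne
  have h1 : ∀ i, isoCut w t i ≤ biCut w (fun v => decide (f v = i)) := by
    intro i
    apply Nat.sInf_le
    refine ⟨_, ?_, ?_, rfl⟩
    · simp [hf i]
    · intro j hj; simp [hf j, hj]
  calc ∑ i : Fin k, isoCut w t i
      ≤ ∑ i : Fin k, biCut w (fun v => decide (f v = i)) :=
        Finset.sum_le_sum (fun i _ => h1 i)
    _ = 2 * cutWeight w f := by
        unfold biCut cutWeight
        rw [Finset.mul_sum, Finset.sum_comm]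
        refine Finset.sum_congr rfl (fun u _ => ?_)
        rw [Finset.mul_sum, Finset.sum_comm]
        refine Finset.sum_congr rfl (fun v _ => ?_)
        by_cases huv : u < v
        · by_cases hfu : f u = f v
          · simp [huv, hfu]
          · rw [if_pos ⟨huv, hfu⟩]
            have : ∀ i : Fin k,
                (if u < v ∧ (decide (f u = i) ≠ decide (f v = i)) then w u v else 0)
                = (if i = f u then w u v else 0) + (if i = f v then w u v else 0) := by
              intro i
              by_cases h1 : i = f u
              · subst h1; simp [huv, Ne.symm hfu, hfu]
              · by_cases h2 : i = f v
                · subst h2; simp [huv, hfu, h1, Ne.symm h1]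
                · simp [h1, h2, Ne.symm h1, Ne.symm h2]
            rw [Finset.sum_congr rfl (fun i _ => this i), Finset.sum_add_distrib,
              Finset.sum_ite_eq' Finset.univ (f u) (fun _ => w u v),
              Finset.sum_ite_eq' Finset.univ (f v) (fun _ => w u v)]
            simp [two_mul]
        · simp [huv]
    _ = 2 * mtc w t := by rw [hfc]; rfl
end

section
/- The sum of the k−1 smallest minimum isolating cut values is an upper bound on some valid multiterminal cut weight: the union of minimum isolating cuts for all terminals except the one with the largest isolating cut value is a valid multiterminal cut, so W(G) ≤ Σ_{s ∈ T} λ(G, s, T\{s}) − max_{s ∈ T} λ(G, s, T\{s}). -/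
open Finset

/-- for a connected graph,
W(G) ≤ Σ_{s ∈ T} λ(G, s, T\{s}) − max_{s ∈ T} λ(G, s, T\{s}). -/
theorem stmt3 {n k : ℕ} (w : Fin n → Fin n → ℕ) (t : Fin k → Fin n)
    (hsym : ∀ a b, w a b = w b a) (hloop : ∀ a, w a a = 0)
    (ht : Function.Injective t) (hk : 2 ≤ k)
    (hconn : ∀ a b : Fin n, Relation.ReflTransGen (fun x y => 0 < w x y) a b) :
    mtc w t ≤ (∑ i : Fin k, isoCut w t i) - Finset.univ.sup (fun i => isoCut w t i) := by

  have hk0 : 0 < k := by omega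
  -- pick i₀ achieving the sup
  haveI : Nonempty (Fin k) := ⟨⟨0, hk0⟩⟩
  obtain ⟨i₀, -, hi₀⟩ := Finset.exists_mem_eq_sup (Finset.univ : Finset (Fin k))
    (Finset.univ_nonempty) (fun i => isoCut w t i)
  -- for each i, the isolating-cut set is nonempty, so sInf is attained
  have hne : ∀ i : Fin k, ∃ g : Fin n → Bool, g (t i) = true ∧
      (∀ j, j ≠ i → g (t j) = false) ∧ biCut w g = isoCut w t i := by
    intro i
    have hmem : isoCut w t i ∈ {c | ∃ g : Fin n → Bool, g (t i) = true ∧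
        (∀ j, j ≠ i → g (t j) = false) ∧ biCut w g = c} := by
      apply Nat.sInf_mem
      refine ⟨biCut w (fun v => decide (v = t i)), fun v => decide (v = t i), ?_, ?_, rfl⟩
      · simp
      · intro j hj
        simp only [decide_eq_false_iff_not]
        intro h
        exact hj (ht h)
    exact hmem
  choose g hg1 hg2 hg3 using hne
  -- define the partition f
  classical
  set S : Fin n → Finset (Fin k) :=
    fun v => Finset.univ.filter (fun i => i ≠ i₀ ∧ g i v = true) with hS
  set f : Fin n → Fin k :=
    fun v => if h : (S v).Nonempty then (S v).min' h else i₀ with hf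
  have hfmem : ∀ v, f v ≠ i₀ → f v ∈ S v := by
    intro v hv
    by_cases h : (S v).Nonempty
    · simpa [hf, h] using (S v).min'_mem h
    · exfalso; apply hv; simp [hf, h]
  have hfmin : ∀ v i, i ∈ S v → f v ≤ i := by
    intro v i hi
    have h : (S v).Nonempty := ⟨i, hi⟩
    simpa [hf, h] using (S v).min'_le i hi
  have hfi0 : ∀ v, f v = i₀ → S v = ∅ := by
    intro v hv
    by_contra h
    have h' : (S v).Nonempty := Finset.nonempty_of_ne_empty h
    have := (S v).min'_mem h'
    rw [show (S v).min' h' = i₀ by simpa [hf, h'] using hv] at this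
    simp [hS] at this
  -- f is a valid MT cut
  have hmt : isMTCut t f := by
    intro i
    by_cases hii : i = i₀
    · subst hii
      have : S (t i) = ∅ := by
        apply Finset.eq_empty_of_forall_notMem
        intro j
        simp only [hS, Finset.mem_filter, Finset.mem_univ, true_and, not_and]
        intro hj
        simp [hg2 j i (Ne.symm hj)]
      simp [hf, this]
    · have hmemi : i ∈ S (t i) := by
        simp [hS, hii, hg1 i]
      have h : (S (t i)).Nonempty := ⟨i, hmemi⟩
      have hm := (S (t i)).min'_mem h
      simp only [hS, Finset.mem_filter, Finset.mem_univ, true_and] at hm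
      have : (S (t i)).min' h = i := by
        by_contra hne'
        have := hg2 _ i (Ne.symm hne')
        rw [this] at hm
        exact absurd hm.2 (by simp)
      simp [hf, h, this]
  -- each cut edge of f is cut by some g i, i ≠ i₀
  have hedge : ∀ u v : Fin n, f u ≠ f v → ∃ i, i ≠ i₀ ∧ g i u ≠ g i v := by
    intro u v huv
    by_cases hu : f u = i₀
    · have hv : f v ≠ i₀ := fun h => huv (hu.trans h.symm)
      have hvm := hfmem v hv
      simp only [hS, Finset.mem_filter, Finset.mem_univ, true_and] at hvm
      refine ⟨f v, hvm.1, ?_⟩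
      have : g (f v) u = false := by
        have hSu := hfi0 u hu
        by_contra h
        have : f v ∈ S u := by
          simp [hS, hvm.1, eq_true_of_ne_false h]
        simp [hSu] at this
      rw [this, hvm.2]; simp
    · by_cases hv : f v = i₀
      · have hum := hfmem u hu
        simp only [hS, Finset.mem_filter, Finset.mem_univ, true_and] at hum
        refine ⟨f u, hum.1, ?_⟩
        have : g (f u) v = false := by
          have hSv := hfi0 v hv
          by_contra h
          have : f u ∈ S v := by
            simp [hS, hum.1, eq_true_of_ne_false h]
          simp [hSv] at this
        rw [this, hum.2]; simp
      · have hum := hfmem u hu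
        have hvm := hfmem v hv
        simp only [hS, Finset.mem_filter, Finset.mem_univ, true_and] at hum hvm
        rcases lt_trichotomy (f u) (f v) with hlt | heq | hgt
        · refine ⟨f u, hum.1, ?_⟩
          have : g (f u) v = false := by
            by_contra h
            have : f u ∈ S v := by
              simp [hS, hum.1, eq_true_of_ne_false h]
            exact absurd (hfmin v _ this) (not_le.mpr hlt)
          rw [this, hum.2]; simp
        · exact absurd heq huv
        · refine ⟨f v, hvm.1, ?_⟩
          have : g (f v) u = false := by
            by_contra h
            have : f v ∈ S u := by
              simp [hS, hvm.1, eq_true_of_ne_false h]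
            exact absurd (hfmin u _ this) (not_le.mpr hgt)
          rw [this, hvm.2]; simp
  -- cutWeight f ≤ sum of biCuts over erase i₀
  have hcw : cutWeight w f ≤ ∑ i ∈ Finset.univ.erase i₀, biCut w (g i) := by
    unfold cutWeight biCut
    have hswap : ∑ i ∈ Finset.univ.erase i₀, ∑ u : Fin n, ∑ v : Fin n,
        (if u < v ∧ g i u ≠ g i v then w u v else 0)
        = ∑ u : Fin n, ∑ v : Fin n, ∑ i ∈ Finset.univ.erase i₀,
        (if u < v ∧ g i u ≠ g i v then w u v else 0) := by
      rw [Finset.sum_comm]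
      exact Finset.sum_congr rfl fun u _ => Finset.sum_comm
    rw [hswap]
    apply Finset.sum_le_sum
    intro u _
    apply Finset.sum_le_sum
    intro v _
    by_cases h : u < v ∧ f u ≠ f v
    · obtain ⟨i, hi, hgi⟩ := hedge u v h.2
      rw [if_pos h]
      calc w u v = (fun i => if u < v ∧ g i u ≠ g i v then w u v else 0) i := by
            exact (if_pos ⟨h.1, hgi⟩).symm
        _ ≤ ∑ i ∈ Finset.univ.erase i₀, (if u < v ∧ g i u ≠ g i v then w u v else 0) :=
            Finset.single_le_sum (f := fun j => if u < v ∧ g j u ≠ g j v then w u v else 0) (fun _ _ => Nat.zero_le _) (Finset.mem_erase.mpr ⟨hi, Finset.mem_univ i⟩)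
    · rw [if_neg h]; exact Nat.zero_le _
  -- assemble
  have hmtc : mtc w t ≤ cutWeight w f := Nat.sInf_le ⟨f, hmt, rfl⟩
  have hsum : ∑ i ∈ Finset.univ.erase i₀, isoCut w t i
      = (∑ i : Fin k, isoCut w t i) - isoCut w t i₀ := by
    have h1 : ∑ i ∈ Finset.univ.erase i₀, isoCut w t i + isoCut w t i₀
        = ∑ i : Fin k, isoCut w t i :=
      Finset.sum_erase_add Finset.univ (fun i => isoCut w t i) (Finset.mem_univ i₀)
    omega
  calc mtc w t ≤ ∑ i ∈ Finset.univ.erase i₀, biCut w (g i) := le_trans hmtc hcw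
    _ = ∑ i ∈ Finset.univ.erase i₀, isoCut w t i := by
        apply Finset.sum_congr rfl; intro i _; exact hg3 i
    _ = (∑ i : Fin k, isoCut w t i) - isoCut w t i₀ := hsum
    _ = (∑ i : Fin k, isoCut w t i) - Finset.univ.sup (fun i => isoCut w t i) := by rw [hi₀]
end

section
/- Let v be a non-terminal vertex of degree exactly two with incident edges e1 = (v,a) and e2 = (v,b) where w(e1) ≥ w(e2). Then there exists a minimum multiterminal cut in which v and a lie in the same block (so e1 can be contracted). -/
open Finset

private lemma decomp {n k : ℕ} (w : Fin n → Fin n → ℕ) (v a b : Fin n)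
    (hsym : ∀ x y, w x y = w y x) (hva : v ≠ a) (hvb : v ≠ b) (hab : a ≠ b)
    (hdeg : ∀ y, y ≠ a → y ≠ b → w v y = 0) (g : Fin n → Fin k) :
    cutWeight w g =
      (∑ u : Fin n, ∑ u' : Fin n,
        if u < u' ∧ g u ≠ g u' ∧ u ≠ v ∧ u' ≠ v then w u u' else 0)
      + ((if g v ≠ g a then w v a else 0) + (if g v ≠ g b then w v b else 0)) := by
  have hsplit : cutWeight w g =
      (∑ u : Fin n, ∑ u' : Fin n,
        if u < u' ∧ g u ≠ g u' ∧ u ≠ v ∧ u' ≠ v then w u u' else 0)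
      + (∑ u : Fin n, ∑ u' : Fin n,
        if u < u' ∧ g u ≠ g u' ∧ (u = v ∨ u' = v) then w u u' else 0) := by
    unfold cutWeight
    rw [← Finset.sum_add_distrib]
    refine Finset.sum_congr rfl fun u _ => ?_
    rw [← Finset.sum_add_distrib]
    refine Finset.sum_congr rfl fun u' _ => ?_
    by_cases h1 : u = v <;> by_cases h2 : u' = v <;> split_ifs <;> simp_all
  rw [hsplit]
  congr 1
  -- evaluate the part touching v
  set F : Fin n → Fin n → ℕ := fun u u' =>
    if u < u' ∧ g u ≠ g u' ∧ (u = v ∨ u' = v) then w u u' else 0 with hF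
  have hzero : ∀ u ∈ Finset.univ, u ∉ ({v, a, b} : Finset (Fin n)) →
      (∑ u' : Fin n, F u u') = 0 := by
    intro u _ hu
    simp only [Finset.mem_insert, Finset.mem_singleton, not_or] at hu
    refine Finset.sum_eq_zero fun u' _ => ?_
    simp only [hF]
    split_ifs with h
    · rcases h.2.2 with h' | h'
      · exact absurd h' hu.1
      · rw [h', hsym u v, hdeg u hu.2.1 hu.2.2]
    · rfl
  have hsub : (∑ u : Fin n, ∑ u' : Fin n, F u u')
      = ∑ u ∈ ({v, a, b} : Finset (Fin n)), ∑ u' : Fin n, F u u' := by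
    exact (Finset.sum_subset (Finset.subset_univ _) hzero).symm
  rw [hsub]
  have hv : (∑ u' : Fin n, F v u')
      = (if v < a ∧ g v ≠ g a then w v a else 0)
        + (if v < b ∧ g v ≠ g b then w v b else 0) := by
    rw [show (∑ u' : Fin n, F v u')
        = ∑ u' ∈ ({a, b} : Finset (Fin n)), F v u' from
      (Finset.sum_subset (Finset.subset_univ _) (by
        intro u' _ hu'
        simp only [Finset.mem_insert, Finset.mem_singleton, not_or] at hu'
        simp only [hF]
        split_ifs with h
        · exact hdeg u' hu'.1 hu'.2
        · rfl)).symm]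
    rw [Finset.sum_insert (by simp [hab]), Finset.sum_singleton]
    simp only [hF]
    congr 1 <;> [skip; skip] <;>
    · split_ifs with h1 h2 h2 <;> first | rfl | (exfalso; tauto)
  have ha : (∑ u' : Fin n, F a u') = (if a < v ∧ g a ≠ g v then w a v else 0) := by
    rw [Finset.sum_eq_single v]
    · simp only [hF]
      split_ifs with h1 h2 h2 <;> first | rfl | (exfalso; tauto)
    · intro u' _ hu'
      simp only [hF]
      split_ifs with h
      · rcases h.2.2 with h' | h'
        · exact absurd h' hva.symm
        · exact absurd h' hu'
      · rfl
    · simp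
  have hb : (∑ u' : Fin n, F b u') = (if b < v ∧ g b ≠ g v then w b v else 0) := by
    rw [Finset.sum_eq_single v]
    · simp only [hF]
      split_ifs with h1 h2 h2 <;> first | rfl | (exfalso; tauto)
    · intro u' _ hu'
      simp only [hF]
      split_ifs with h
      · rcases h.2.2 with h' | h'
        · exact absurd h' hvb.symm
        · exact absurd h' hu'
      · rfl
    · simp
  rw [Finset.sum_insert (by simp [hva, hvb]), Finset.sum_insert (by simp [hab]),
    Finset.sum_singleton, hv, ha, hb]
  have pair : ∀ (x : Fin n), v ≠ x →
      (if v < x ∧ g v ≠ g x then w v x else 0) + (if x < v ∧ g x ≠ g v then w x v else 0)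
      = (if g v ≠ g x then w v x else 0) := by
    intro x hx
    rcases lt_trichotomy v x with h | h | h
    · simp [h, asymm h]
    · exact absurd h hx
    · simp [h, asymm h, hsym x v, ne_comm]
  have := pair a hva
  have := pair b hvb
  omega

/-- DegreeTwo: a non-terminal vertex v with exactly two incident
edges (v,a), (v,b), where w(v,a) ≥ w(v,b), lies in the block of a in some minimum
multiterminal cut. -/
theorem stmt5 {n k : ℕ} (w : Fin n → Fin n → ℕ) (t : Fin k → Fin n)
    (hsym : ∀ a b, w a b = w b a) (hloop : ∀ a, w a a = 0)
    (ht : Function.Injective t) (hk : 0 < k)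
    (v a b : Fin n) (hva : v ≠ a) (hvb : v ≠ b) (hab : a ≠ b)
    (hvt : ∀ i, t i ≠ v)
    (hpa : 0 < w v a) (hpb : 0 < w v b)
    (hord : w v b ≤ w v a)
    (hdeg : ∀ y, y ≠ a → y ≠ b → w v y = 0) :
    ∃ f : Fin n → Fin k, isMTCut t f ∧ cutWeight w f = mtc w t ∧ f v = f a := by
  classical
  -- the set of cut values is nonempty
  have hne : {c | ∃ f : Fin n → Fin k, isMTCut t f ∧ cutWeight w f = c}.Nonempty := by
    refine ⟨_, fun x => if h : ∃ i, t i = x then h.choose else ⟨0, hk⟩, fun i => ?_, rfl⟩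
    have h : ∃ j, t j = t i := ⟨i, rfl⟩
    simp only [dif_pos h]
    exact ht h.choose_spec
  have hmem : mtc w t ∈ {c | ∃ f : Fin n → Fin k, isMTCut t f ∧ cutWeight w f = c} :=
    Nat.sInf_mem hne
  obtain ⟨f, hf, hfc⟩ := hmem
  by_cases hfa : f v = f a
  · exact ⟨f, hf, hfc, hfa⟩
  · set f' : Fin n → Fin k := Function.update f v (f a) with hf'
    have hfv' : f' v = f a := Function.update_self v (f a) f
    have hne' : ∀ u : Fin n, u ≠ v → f' u = f u := fun u hu => Function.update_of_ne hu _ _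
    have hcut' : isMTCut t f' := fun i => by rw [hne' (t i) (hvt i)]; exact hf i
    have hC : (∑ u : Fin n, ∑ u' : Fin n,
          if u < u' ∧ f' u ≠ f' u' ∧ u ≠ v ∧ u' ≠ v then w u u' else 0)
        = (∑ u : Fin n, ∑ u' : Fin n,
          if u < u' ∧ f u ≠ f u' ∧ u ≠ v ∧ u' ≠ v then w u u' else 0) := by
      refine Finset.sum_congr rfl fun u _ => Finset.sum_congr rfl fun u' _ => ?_
      by_cases h1 : u = v
      · simp [h1]
      · by_cases h2 : u' = v
        · simp [h2]
        · rw [hne' u h1, hne' u' h2]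
    have d1 := decomp w v a b hsym hva hvb hab hdeg f
    have d2 := decomp w v a b hsym hva hvb hab hdeg f'
    rw [hC] at d2
    rw [hfv', hne' a hva.symm, hne' b hvb.symm] at d2
    have hle : cutWeight w f' ≤ cutWeight w f := by
      rw [d1, d2]
      have h1 : (if f a ≠ f a then w v a else 0) = 0 := by simp
      have h2 : (if f v ≠ f a then w v a else 0) = w v a := if_pos hfa
      have h3 : (if f a ≠ f b then w v b else 0) ≤ w v b := by split_ifs <;> omega
      have h4 : (0:ℕ) ≤ (if f v ≠ f b then w v b else 0) := Nat.zero_le _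
      omega
    have hge : mtc w t ≤ cutWeight w f' := Nat.sInf_le ⟨f', hcut', rfl⟩
    refine ⟨f', hcut', le_antisymm (hfc ▸ hle) hge, ?_⟩
    rw [hfv', hne' a hva.symm]
end

section
/- (HeavyEdge) If a non-terminal vertex u has an incident edge e = (u,v) with w(e) ≥ (1/2) · deg_w(u), where deg_w(u) is the weighted degree of u, then there exists a minimum multiterminal cut in which u and v lie in the same block. -/
open Finset

lemma ite_split (p q : Prop) [Decidable p] [Decidable q] (c : ℕ) :
    (if p then c else 0) = (if p ∧ q then c else 0) + (if p ∧ ¬q then c else 0) := by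
  by_cases hp : p <;> by_cases hq : q <;> simp [hp, hq]

/-- Decomposition of the cut weight into edges not touching `u` plus the star at `u`. -/
lemma cut_decomp {n k : ℕ} (w : Fin n → Fin n → ℕ) (hsym : ∀ a b, w a b = w b a)
    (u : Fin n) (f : Fin n → Fin k) :
    cutWeight w f =
      (∑ a : Fin n, ∑ b : Fin n,
        if a < b ∧ f a ≠ f b ∧ a ≠ u ∧ b ≠ u then w a b else 0)
      + ∑ x : Fin n, if f x ≠ f u then w u x else 0 := by
  unfold cutWeight
  have h1 : ∀ a b : Fin n, (if a < b ∧ f a ≠ f b then w a b else 0) =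
      (if a < b ∧ f a ≠ f b ∧ a ≠ u ∧ b ≠ u then w a b else 0)
      + ((if b = u then (if a < u ∧ f a ≠ f u then w a u else 0) else 0)
        + (if a = u then (if u < b ∧ f u ≠ f b then w u b else 0) else 0)) := by
    intro a b
    by_cases hab : a < b <;> by_cases hf : f a ≠ f b <;>
      by_cases ha : a = u <;> by_cases hb : b = u <;>
      subst_vars <;> simp_all <;>
      first
      | rfl
      | (exact absurd hab (lt_asymm ‹_›))
      | (intro h; exact absurd hab (by simp [h]))
      | (intro h; omega)
  calc (∑ a : Fin n, ∑ b : Fin n, if a < b ∧ f a ≠ f b then w a b else 0)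
      = ∑ a : Fin n, ∑ b : Fin n,
          ((if a < b ∧ f a ≠ f b ∧ a ≠ u ∧ b ≠ u then w a b else 0)
          + ((if b = u then (if a < u ∧ f a ≠ f u then w a u else 0) else 0)
            + (if a = u then (if u < b ∧ f u ≠ f b then w u b else 0) else 0))) := by
        refine Finset.sum_congr rfl fun a _ => Finset.sum_congr rfl fun b _ => h1 a b
    _ = (∑ a : Fin n, ∑ b : Fin n,
          if a < b ∧ f a ≠ f b ∧ a ≠ u ∧ b ≠ u then w a b else 0)
        + ((∑ a : Fin n, if a < u ∧ f a ≠ f u then w a u else 0)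
          + (∑ b : Fin n, if u < b ∧ f u ≠ f b then w u b else 0)) := by
        simp [Finset.sum_add_distrib]
    _ = (∑ a : Fin n, ∑ b : Fin n,
          if a < b ∧ f a ≠ f b ∧ a ≠ u ∧ b ≠ u then w a b else 0)
        + ∑ x : Fin n, if f x ≠ f u then w u x else 0 := by
        congr 1
        rw [← Finset.sum_add_distrib]
        refine Finset.sum_congr rfl fun x _ => ?_
        rcases lt_trichotomy x u with h | h | h
        · have h2 : ¬ u < x := lt_asymm h
          by_cases hf : f x = f u
          · simp [h, h2, hf, hsym x u]
          · simp [h, h2, hf, Ne.symm hf, hsym x u]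
        · subst h; simp
        · have h2 : ¬ x < u := lt_asymm h
          by_cases hf : f x = f u
          · simp [h, h2, hf]
          · simp [h, h2, hf, Ne.symm hf]

/-- HeavyEdge: if a non-terminal vertex u has an incident edge (u,v)
with w(u,v) ≥ deg_w(u)/2, then some minimum multiterminal cut puts u and v in the
same block. -/
theorem stmt6 {n k : ℕ} (w : Fin n → Fin n → ℕ) (t : Fin k → Fin n)
    (hsym : ∀ a b, w a b = w b a) (hloop : ∀ a, w a a = 0)
    (ht : Function.Injective t) (hk : 0 < k)
    (u v : Fin n) (huv : u ≠ v)
    (hut : ∀ i, t i ≠ u)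
    (hpos : 0 < w u v)
    (hheavy : ∑ x : Fin n, w u x ≤ 2 * w u v) :
    ∃ f : Fin n → Fin k, isMTCut t f ∧ cutWeight w f = mtc w t ∧ f u = f v := by
  haveI : Nonempty (Fin k) := ⟨⟨0, hk⟩⟩
  have hne : {c | ∃ f : Fin n → Fin k, isMTCut t f ∧ cutWeight w f = c}.Nonempty :=
    ⟨_, Function.invFun t, fun i => Function.leftInverse_invFun ht i, rfl⟩
  obtain ⟨f, hf, hcw⟩ := Nat.sInf_mem hne
  by_cases hfe : f u = f v
  · exact ⟨f, hf, hcw, hfe⟩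
  · set g : Fin n → Fin k := Function.update f u (f v) with hg
    have hgu : g u = f v := Function.update_self u (f v) f
    have hgx : ∀ x, x ≠ u → g x = f x := fun x hx => Function.update_of_ne hx (f v) f
    have hgmt : isMTCut t g := fun i => by rw [hgx _ (hut i)]; exact hf i
    have hSg : (∑ x : Fin n, if g x ≠ g u then w u x else 0) ≤ w u v := by
      have hle : (∑ x : Fin n, if g x ≠ g u then w u x else 0)
          ≤ ∑ x : Fin n, (if x = v then 0 else w u x) := by
        refine Finset.sum_le_sum fun x _ => ?_
        by_cases hxv : x = v
        · have h3 : g v = g u := by rw [hgu, hgx v (Ne.symm huv)]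
          simp [hxv, h3]
        · simp only [hxv, if_neg]
          split <;> simp
      have hsum : (∑ x : Fin n, (if x = v then 0 else w u x)) + w u v
          = ∑ x : Fin n, w u x := by
        have h2 : (∑ x : Fin n, if x = v then w u x else 0) = w u v := by simp
        rw [← h2, ← Finset.sum_add_distrib]
        refine Finset.sum_congr rfl fun x _ => ?_
        split <;> simp
      omega
    have hSf : w u v ≤ ∑ x : Fin n, if f x ≠ f u then w u x else 0 := by
      have := Finset.single_le_sum
        (f := fun x : Fin n => if f x ≠ f u then w u x else 0)
        (fun x _ => Nat.zero_le _) (Finset.mem_univ v)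
      simpa [Ne.symm hfe, ne_comm] using this
    have hRest : (∑ a : Fin n, ∑ b : Fin n,
          if a < b ∧ g a ≠ g b ∧ a ≠ u ∧ b ≠ u then w a b else 0)
        = ∑ a : Fin n, ∑ b : Fin n,
          if a < b ∧ f a ≠ f b ∧ a ≠ u ∧ b ≠ u then w a b else 0 := by
      refine Finset.sum_congr rfl fun a _ => Finset.sum_congr rfl fun b _ => ?_
      by_cases ha : a = u
      · simp [ha]
      · by_cases hb : b = u
        · simp [hb]
        · rw [hgx a ha, hgx b hb]
    have hle : cutWeight w g ≤ cutWeight w f := by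
      rw [cut_decomp w hsym u g, cut_decomp w hsym u f, hRest]
      exact Nat.add_le_add_left (le_trans hSg hSf) _
    have hcw' : cutWeight w f = mtc w t := hcw
    have hmle : mtc w t ≤ cutWeight w g := Nat.sInf_le ⟨g, hgmt, rfl⟩
    have : cutWeight w g = mtc w t := le_antisymm (hcw' ▸ hle) hmle
    exact ⟨g, hgmt, this, by rw [hgu, hgx v (Ne.symm huv)]⟩
end

section
/- (SemiEnclosed) Let v be a non-terminal vertex, t1 the terminal with maximum edge weight w(v,t1) to v, and t2 the terminal with second largest weight to v. If w(v,t1) > w(v,t2) + Σ_{u ∈ V\T} w(v,u), then there exists a minimum multiterminal cut in which v lies in the block of t1. -/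
open Finset

lemma cut_split {n k : ℕ} (w : Fin n → Fin n → ℕ) (hsym : ∀ a b, w a b = w b a)
    (f : Fin n → Fin k) (v : Fin n) :
    cutWeight w f =
      (∑ u ∈ univ.erase v, ∑ u' ∈ univ.erase v, if u < u' ∧ f u ≠ f u' then w u u' else 0)
      + ∑ u ∈ univ.erase v, (if f u ≠ f v then w v u else 0) := by
  unfold cutWeight
  have h1 : ∀ u : Fin n, (∑ u' : Fin n, if u < u' ∧ f u ≠ f u' then w u u' else 0)
      = (if u < v ∧ f u ≠ f v then w u v else 0)
        + ∑ u' ∈ univ.erase v, (if u < u' ∧ f u ≠ f u' then w u u' else 0) :=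
    fun u => (Finset.add_sum_erase _ _ (mem_univ v)).symm
  simp only [h1]
  rw [Finset.sum_add_distrib]
  rw [← Finset.add_sum_erase _ (fun u => (if u < v ∧ f u ≠ f v then w u v else 0)) (mem_univ v)]
  rw [← Finset.add_sum_erase _
      (fun u => ∑ u' ∈ univ.erase v, (if u < u' ∧ f u ≠ f u' then w u u' else 0)) (mem_univ v)]
  simp only [lt_self_iff_false, false_and, if_false, zero_add]
  have hS : (∑ u ∈ univ.erase v, (if u < v ∧ f u ≠ f v then w u v else 0))
      + (∑ u' ∈ univ.erase v, if v < u' ∧ f v ≠ f u' then w v u' else 0)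
      = ∑ u ∈ univ.erase v, (if f u ≠ f v then w v u else 0) := by
    rw [← Finset.sum_add_distrib]
    apply Finset.sum_congr rfl
    intro u hu
    have huv : u ≠ v := (mem_erase.mp hu).1
    rcases lt_trichotomy u v with h | h | h
    · have h2 : ¬ v < u := not_lt.mpr h.le
      simp [h, h2, hsym u v, ne_comm]
    · exact absurd h huv
    · have h2 : ¬ u < v := not_lt.mpr h.le
      simp [h, h2, ne_comm]
  omega

/-- SemiEnclosed: if a non-terminal vertex v satisfies
w(v,t1) > w(v,t2) + Σ_{u ∉ T} w(v,u), where t1 and t2 are the terminals of largest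
and second largest weight to v, then some minimum multiterminal cut places v in the
block of t1. -/
theorem stmt8 {n k : ℕ} (w : Fin n → Fin n → ℕ) (t : Fin k → Fin n)
    (hsym : ∀ a b, w a b = w b a) (hloop : ∀ a, w a a = 0)
    (ht : Function.Injective t) (hk : 0 < k)
    (v : Fin n) (hvt : ∀ j, t j ≠ v)
    (i1 i2 : Fin k) (hi12 : i1 ≠ i2)
    (hmax1 : ∀ j, w v (t j) ≤ w v (t i1))
    (hmax2 : ∀ j, j ≠ i1 → w v (t j) ≤ w v (t i2))
    (hsemi : w v (t i2) + ∑ u ∈ Finset.univ.filter (fun u => ∀ j, t j ≠ u), w v u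
      < w v (t i1)) :
    ∃ f : Fin n → Fin k, isMTCut t f ∧ cutWeight w f = mtc w t ∧ f v = i1 := by
  classical
  -- a valid cut exists
  set S : Set ℕ := {c | ∃ f : Fin n → Fin k, isMTCut t f ∧ cutWeight w f = c} with hSdef
  have hne : S.Nonempty := by
    refine ⟨_, fun u => if h : ∃ m, t m = u then h.choose else i1, ?_, rfl⟩
    intro i
    have h : ∃ m, t m = t i := ⟨i, rfl⟩
    simp only [dif_pos h]
    exact ht h.choose_spec
  obtain ⟨f, hf, hfc⟩ := Nat.sInf_mem hne
  by_cases hfv : f v = i1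
  · exact ⟨f, hf, hfc, hfv⟩
  exfalso
  set f' : Fin n → Fin k := Function.update f v i1 with hf'def
  have hf'eq : ∀ u ≠ v, f' u = f u := fun u hu => Function.update_of_ne hu _ _
  have hf'v : f' v = i1 := Function.update_self _ _ _
  have hf' : isMTCut t f' := fun i => by rw [hf'eq _ (hvt i)]; exact hf i
  -- decompositions
  have hd := cut_split w hsym f v
  have hd' := cut_split w hsym f' v
  have hT4 : (∑ u ∈ univ.erase v, ∑ u' ∈ univ.erase v, if u < u' ∧ f' u ≠ f' u' then w u u' else 0)
      = ∑ u ∈ univ.erase v, ∑ u' ∈ univ.erase v, if u < u' ∧ f u ≠ f u' then w u u' else 0 := by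
    apply Finset.sum_congr rfl; intro u hu
    apply Finset.sum_congr rfl; intro u' hu'
    rw [hf'eq _ (mem_erase.mp hu).1, hf'eq _ (mem_erase.mp hu').1]
  -- the S-exchange identity
  have hkey : (∑ u ∈ univ.erase v, (if f' u ≠ f' v then w v u else 0))
      + (∑ u ∈ univ.erase v, (if f u = i1 then w v u else 0))
      = (∑ u ∈ univ.erase v, (if f u ≠ f v then w v u else 0))
      + (∑ u ∈ univ.erase v, (if f u = f v then w v u else 0)) := by
    rw [← Finset.sum_add_distrib, ← Finset.sum_add_distrib]
    apply Finset.sum_congr rfl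
    intro u hu
    rw [hf'eq _ (mem_erase.mp hu).1, hf'v]
    have hne1 : i1 ≠ f v := fun h => hfv h.symm
    by_cases h1 : f u = i1 <;> by_cases h2 : f u = f v <;> simp [h1, h2, hne1, hfv]
  -- lower bound on X
  have hX : w v (t i1) ≤ ∑ u ∈ univ.erase v, (if f u = i1 then w v u else 0) := by
    have hmem : t i1 ∈ univ.erase v := mem_erase.mpr ⟨hvt i1, mem_univ _⟩
    have := Finset.single_le_sum (f := fun u => if f u = i1 then w v u else 0)
      (fun u _ => Nat.zero_le _) hmem
    simpa [hf i1] using this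
  -- upper bound on Y
  have hY : (∑ u ∈ univ.erase v, (if f u = f v then w v u else 0))
      ≤ w v (t (f v)) + ∑ u ∈ Finset.univ.filter (fun u => ∀ j, t j ≠ u), w v u := by
    rw [← Finset.sum_filter_add_sum_filter_not (univ.erase v) (fun u => ∀ j, t j ≠ u)]
    have hb1 : (∑ u ∈ (univ.erase v).filter (fun u => ∀ j, t j ≠ u),
        (if f u = f v then w v u else 0))
        ≤ ∑ u ∈ Finset.univ.filter (fun u => ∀ j, t j ≠ u), w v u := by
      calc (∑ u ∈ (univ.erase v).filter (fun u => ∀ j, t j ≠ u),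
            (if f u = f v then w v u else 0))
          ≤ ∑ u ∈ (univ.erase v).filter (fun u => ∀ j, t j ≠ u), w v u :=
            Finset.sum_le_sum (fun u _ => by split <;> simp)
        _ ≤ ∑ u ∈ Finset.univ.filter (fun u => ∀ j, t j ≠ u), w v u :=
            Finset.sum_le_sum_of_subset
              (Finset.filter_subset_filter _ (Finset.erase_subset _ _))
    have hb2 : (∑ u ∈ (univ.erase v).filter (fun u => ¬ ∀ j, t j ≠ u),
        (if f u = f v then w v u else 0)) ≤ w v (t (f v)) := by
      calc (∑ u ∈ (univ.erase v).filter (fun u => ¬ ∀ j, t j ≠ u),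
            (if f u = f v then w v u else 0))
          ≤ ∑ u ∈ (univ.erase v).filter (fun u => ¬ ∀ j, t j ≠ u),
            (if u = t (f v) then w v u else 0) := by
            apply Finset.sum_le_sum
            intro u hu
            obtain ⟨-, hterm⟩ := Finset.mem_filter.mp hu
            push_neg at hterm
            obtain ⟨m, hm⟩ := hterm
            by_cases h : f u = f v
            · have hmu : m = f v := by rw [← hf m, hm, h]
              have hu2 : u = t (f v) := by rw [← hm, hmu]
              rw [hu2] at h ⊢
              simp [h]
            · simp [h]
        _ ≤ w v (t (f v)) := by
            rw [Finset.sum_ite_eq' _ (t (f v)) (fun u => w v u)]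
            split <;> simp
    omega
  have hfvne : f v ≠ i1 := hfv
  have h2 : w v (t (f v)) ≤ w v (t i2) := hmax2 _ hfvne
  -- f' gives a strictly smaller cut: contradiction
  have hle : mtc w t ≤ cutWeight w f' := Nat.sInf_le ⟨f', hf', rfl⟩
  have hmtc : mtc w t = sInf S := rfl
  rw [hd', hT4, hmtc] at hle
  rw [hd] at hfc
  omega
end

section
/- (HighConnectivity bound) If u and v belong to different blocks of a minimum multiterminal cut of G, then λ(u,v) + (1/4) Σ_{i ∉ max_2} λ(G, t_i, T\{t_i}) ≤ W(G), where max_2 is the index set of the two largest isolating cut values. Consequently, if λ(u,v) exceeds W(G) minus this quarter-sum, u and v lie in the same block of every minimum multiterminal cut. -/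
open Finset

lemma pair_split {n : ℕ} (F : Fin n → Fin n → ℕ)
    (hdiag : ∀ a, F a a = 0) (hsymF : ∀ a b, F a b = F b a) :
    ∑ a : Fin n, ∑ b : Fin n, F a b
      = 2 * ∑ a : Fin n, ∑ b : Fin n, (if a < b then F a b else 0) := by
  have h2 : (∑ a : Fin n, ∑ b : Fin n, (if a < b then F a b else 0))
      = ∑ a : Fin n, ∑ b : Fin n, (if b < a then F a b else 0) := by
    rw [Finset.sum_comm]
    refine Finset.sum_congr rfl fun a _ => Finset.sum_congr rfl fun b _ => ?_
    by_cases h : b < a <;> simp [h, hsymF b a]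
  have key : ∀ a b : Fin n,
      (if a < b then F a b else 0) + (if b < a then F a b else 0) = F a b := by
    intro a b
    rcases lt_trichotomy a b with h | h | h
    · simp [h, asymm h]
    · subst h; simp [hdiag]
    · simp [h, asymm h]
  calc ∑ a : Fin n, ∑ b : Fin n, F a b
      = ∑ a : Fin n, ∑ b : Fin n,
          ((if a < b then F a b else 0) + (if b < a then F a b else 0)) := by
        simp only [key]
    _ = (∑ a : Fin n, ∑ b : Fin n, (if a < b then F a b else 0))
        + ∑ a : Fin n, ∑ b : Fin n, (if b < a then F a b else 0) := by
        simp [Finset.sum_add_distrib]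
    _ = 2 * ∑ a : Fin n, ∑ b : Fin n, (if a < b then F a b else 0) := by
        rw [← h2]; ring

lemma biCut_eq_half {n : ℕ} (w : Fin n → Fin n → ℕ)
    (hsym : ∀ a b, w a b = w b a) (g : Fin n → Bool) :
    2 * biCut w g = ∑ a : Fin n, ∑ b : Fin n, (if g a ≠ g b then w a b else 0) := by
  rw [show biCut w g = ∑ a : Fin n, ∑ b : Fin n,
      (if a < b then (if g a ≠ g b then w a b else 0) else 0) by
    refine Finset.sum_congr rfl fun a _ => Finset.sum_congr rfl fun b _ => ?_
    by_cases h1 : a < b <;> by_cases h2 : g a ≠ g b <;> simp [biCut, h1, h2]]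
  rw [← pair_split]
  · intro a; simp
  · intro a b; by_cases h : g a = g b <;> simp [h, Ne.symm, hsym a b, ne_comm]

lemma biCut_not {n : ℕ} (w : Fin n → Fin n → ℕ) (g : Fin n → Bool) :
    biCut w (fun x => !g x) = biCut w g := by
  refine Finset.sum_congr rfl fun a _ => Finset.sum_congr rfl fun b _ => ?_
  congr 1
  simp

lemma biCut_block {n k : ℕ} (w : Fin n → Fin n → ℕ)
    (hsym : ∀ a b, w a b = w b a) (hloop : ∀ a, w a a = 0)
    (f : Fin n → Fin k) (i : Fin k) :
    biCut w (fun x => decide (f x = i)) = blockBd w f i := by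
  have h1 := biCut_eq_half w hsym (fun x => decide (f x = i))
  have h2 : ∑ a : Fin n, ∑ b : Fin n,
      (if (decide (f a = i) : Bool) ≠ decide (f b = i) then w a b else 0)
      = 2 * blockBd w f i := by
    have split : ∀ a b : Fin n,
        (if (decide (f a = i) : Bool) ≠ decide (f b = i) then w a b else 0)
        = (if f a = i ∧ f b ≠ i then w a b else 0)
          + (if f b = i ∧ f a ≠ i then w a b else 0) := by
      intro a b
      by_cases ha : f a = i <;> by_cases hb : f b = i <;> simp [ha, hb]
    have hswap : (∑ a : Fin n, ∑ b : Fin n, (if f b = i ∧ f a ≠ i then w a b else 0))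
        = blockBd w f i := by
      rw [Finset.sum_comm]
      refine Finset.sum_congr rfl fun a _ => Finset.sum_congr rfl fun b _ => ?_
      by_cases h : f a = i ∧ f b ≠ i <;> simp [h, hsym a b]
    simp only [split, Finset.sum_add_distrib, hswap]
    rw [two_mul]; rfl
  omega

lemma sum_blockBd {n k : ℕ} (w : Fin n → Fin n → ℕ)
    (hsym : ∀ a b, w a b = w b a) (hloop : ∀ a, w a a = 0) (f : Fin n → Fin k) :
    ∑ i : Fin k, blockBd w f i = 2 * cutWeight w f := by
  have h1 : ∑ i : Fin k, blockBd w f i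
      = ∑ a : Fin n, ∑ b : Fin n, (if f a ≠ f b then w a b else 0) := by
    unfold blockBd
    rw [Finset.sum_comm]
    refine Finset.sum_congr rfl fun a _ => ?_
    rw [Finset.sum_comm]
    refine Finset.sum_congr rfl fun b _ => ?_
    rw [show (fun i => if f a = i ∧ f b ≠ i then w a b else 0)
        = fun i => if f a = i then (if f b ≠ i then w a b else 0) else 0 by
      funext i; by_cases h1 : f a = i <;> by_cases h2 : f b ≠ i <;> simp [h1, h2]]
    rw [Finset.sum_ite_eq Finset.univ (f a) (fun i => if f b ≠ i then w a b else 0)]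
    simp [ne_comm]
  rw [h1, pair_split]
  · congr 1
    refine Finset.sum_congr rfl fun a _ => Finset.sum_congr rfl fun b _ => ?_
    by_cases h1 : a < b <;> by_cases h2 : f a ≠ f b <;> simp [cutWeight, h1, h2]
  · intro a; simp
  · intro a b; by_cases h : f a = f b <;> simp [h, hsym a b, ne_comm]

/-- HighConnectivity: if u, v are in different blocks of a minimum
multiterminal cut, then λ(u,v) + (1/4) Σ_{i ∉ max_2} λ(G,t_i,T\{t_i}) ≤ W(G)
(stated multiplied by 4); consequently if λ(u,v) exceeds W(G) minus the quarter-sum,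
u and v lie in the same block of every minimum multiterminal cut. -/
theorem stmt12 {n k : ℕ} (w : Fin n → Fin n → ℕ) (t : Fin k → Fin n)
    (hsym : ∀ a b, w a b = w b a) (hloop : ∀ a, w a a = 0)
    (ht : Function.Injective t) (hk : 2 ≤ k)
    (i1 i2 : Fin k) (hi12 : i1 ≠ i2)
    (hmax1 : ∀ j, isoCut w t j ≤ isoCut w t i1)
    (hmax2 : ∀ j, j ≠ i1 → isoCut w t j ≤ isoCut w t i2)
    (u v : Fin n) :
    (∀ f : Fin n → Fin k, isMTCut t f → cutWeight w f = mtc w t → f u ≠ f v →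
      4 * minUV w u v + ∑ j ∈ Finset.univ \ {i1, i2}, isoCut w t j ≤ 4 * mtc w t) ∧
    (4 * mtc w t < 4 * minUV w u v + ∑ j ∈ Finset.univ \ {i1, i2}, isoCut w t j →
      ∀ f : Fin n → Fin k, isMTCut t f → cutWeight w f = mtc w t → f u = f v) := by
  have iso_le : ∀ (f : Fin n → Fin k), isMTCut t f → ∀ j, isoCut w t j ≤ blockBd w f j := by
    intro f hf j
    rw [← biCut_block w hsym hloop f j]
    apply Nat.sInf_le
    exact ⟨fun x => decide (f x = j), by simp [hf j],
      fun j' hj' => by simp [hf j', hj'], rfl⟩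
  have htwo : ∀ a b : Fin k, a ≠ b →
      isoCut w t a + isoCut w t b ≤ isoCut w t i1 + isoCut w t i2 := by
    intro a b hab
    by_cases ha : a = i1
    · subst ha; exact add_le_add le_rfl (hmax2 b (Ne.symm hab))
    · by_cases hb : b = i1
      · subst hb
        have := hmax2 a ha
        omega
      · exact add_le_add (hmax1 a) (hmax2 b hb)
  have main : ∀ f : Fin n → Fin k, isMTCut t f → cutWeight w f = mtc w t → f u ≠ f v →
      4 * minUV w u v + ∑ j ∈ Finset.univ \ {i1, i2}, isoCut w t j ≤ 4 * mtc w t := by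
    intro f hf hmin hne
    have hla : minUV w u v ≤ blockBd w f (f u) := by
      rw [← biCut_block w hsym hloop f (f u)]
      apply Nat.sInf_le
      exact ⟨fun x => decide (f x = f u), by simp, by simp [Ne.symm hne], rfl⟩
    have hlb : minUV w u v ≤ blockBd w f (f v) := by
      rw [← biCut_block w hsym hloop f (f v), ← biCut_not w (fun x => decide (f x = f v))]
      apply Nat.sInf_le
      exact ⟨fun x => !decide (f x = f v), by simp [hne], by simp, rfl⟩
    have e1 : (∑ j ∈ Finset.univ \ {i1, i2}, isoCut w t j)
        + (isoCut w t i1 + isoCut w t i2) = ∑ j : Fin k, isoCut w t j := by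
      rw [← Finset.sum_pair hi12]
      exact Finset.sum_sdiff (Finset.subset_univ _)
    have e2 : (∑ j ∈ Finset.univ \ {f u, f v}, isoCut w t j)
        + (isoCut w t (f u) + isoCut w t (f v)) = ∑ j : Fin k, isoCut w t j := by
      rw [← Finset.sum_pair hne]
      exact Finset.sum_sdiff (Finset.subset_univ _)
    have hS2 : (∑ j ∈ Finset.univ \ {f u, f v}, isoCut w t j)
        ≤ ∑ j ∈ Finset.univ \ {f u, f v}, blockBd w f j :=
      Finset.sum_le_sum fun j _ => iso_le f hf j
    have e3 : (∑ j ∈ Finset.univ \ {f u, f v}, blockBd w f j)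
        + (blockBd w f (f u) + blockBd w f (f v)) = ∑ j : Fin k, blockBd w f j := by
      rw [← Finset.sum_pair hne]
      exact Finset.sum_sdiff (Finset.subset_univ _)
    have hT : ∑ j : Fin k, blockBd w f j = 2 * mtc w t := by
      rw [sum_blockBd w hsym hloop f, hmin]
    have h2l := htwo (f u) (f v) hne
    omega
  refine ⟨main, ?_⟩
  intro hlt f hf hmin
  by_contra hne
  exact absurd (main f hf hmin hne) (Nat.not_le.mpr hlt)
end
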